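/- arXiv:1306.6018 — 2 statements merged into one kernel-verified Lean document; each statement's English description precedes it below -/
import Mathlib

section
/- There exists an automorphism ψ of the symmetric group S_6 with ψ((1 2)) = (1 6)(3 4)(2 5) and ψ((1 2 3 4 5 6)) = (1 3 4)(2 6), and any such automorphism is not inner. -/
/-- The permutation `(1 6)(3 4)(2 5)` of `{1,…,6}` (0-based: `(0 5)(2 3)(1 4)`). -/
def psiOfSwap : Equiv.Perm (Fin 6) :=
  Equiv.swap 0 5 * Equiv.swap 2 3 * Equiv.swap 1 4

/-- The permutation `(1 3 4)(2 6)` of `{1,…,6}` (0-based: `(0 2 3)(1 5)`). -/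
def psiOfCycle : Equiv.Perm (Fin 6) :=
  Equiv.swap 0 2 * Equiv.swap 2 3 * Equiv.swap 1 5

/-!
`S₆` permutes the six 1-factorizations of the complete graph `K₆` (Sylvester's synthematic
totals), which gives a homomorphism `ψ : S₆ →* S₆` with the prescribed values on the generators
`(1 2)` and `(1 2 3 4 5 6)`. Its square agrees on these generators with an inner automorphism,
so `ψ` is injective, hence an automorphism. It sends a transposition to a product of three
disjoint transpositions, which no inner automorphism does.
-/

open Equiv Function Pointwise

section IndexPermHom

variable {G α ι : Type*} [Group G] [MulAction G α] {f : ι → α}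

lemma smul_mem_range_of_closure_eq_top {s : Set G} (hs : Subgroup.closure s = ⊤)
    (hperm : ∀ g ∈ s, ∃ π : Perm ι, ∀ i, g • f i = f (π i)) (g : G) (i : ι) :
    g • f i ∈ Set.range f := by
  have hstab : Subgroup.closure s ≤ MulAction.stabilizer G (Set.range f) := by
    rw [Subgroup.closure_le]
    intro g hg
    obtain ⟨π, hπ⟩ := hperm g hg
    rw [SetLike.mem_coe, MulAction.mem_stabilizer_iff, ← Set.range_smul, funext hπ]
    exact π.surjective.range_comp f
  have hg : g • Set.range f = Set.range f := hstab (hs ▸ Subgroup.mem_top g)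
  exact hg ▸ Set.smul_mem_smul_set (Set.mem_range_self i)

variable (hf : Injective f) (hinv : ∀ (g : G) i, g • f i ∈ Set.range f)

noncomputable def indexPermHom : G →* Perm ι :=
  (Equiv.ofInjective f hf).symm.permCongrHom.toMonoidHom.comp
    (MulAction.toPermHom G
      ({ carrier := Set.range f
         smul_mem' := by rintro g _ ⟨i, rfl⟩; exact hinv g i } : SubMulAction G α))

lemma apply_indexPermHom (g : G) (i : ι) : f (indexPermHom hf hinv g i) = g • f i :=
  Equiv.apply_ofInjective_symm hf _

lemma indexPermHom_eq {g : G} {π : Perm ι} (h : ∀ i, g • f i = f (π i)) :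
    indexPermHom hf hinv g = π :=
  Equiv.ext fun i => hf (by rw [apply_indexPermHom hf hinv, h])

end IndexPermHom

lemma closure_finRotate_swap_zero_one (n : ℕ) :
    Subgroup.closure {finRotate (n + 2), swap 0 1} = ⊤ := by
  have h := Perm.closure_cycle_adjacent_swap isCycle_finRotate support_finRotate (0 : Fin (n + 2))
  rwa [finRotate_apply, zero_add] at h

/-- Each entry is a set of five perfect matchings of `K₆` partitioning its fifteen edges; these
are all six such factorizations, listed in the order that makes the action of `S₆` on them send
`(1 2)` to `psiOfSwap` and `(1 2 3 4 5 6)` to `psiOfCycle`. -/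
def synthematicTotal : Fin 6 → Finset (Finset (Finset (Fin 6))) :=
  ![ {{{0,1},{2,4},{3,5}}, {{0,2},{1,5},{3,4}}, {{0,3},{1,2},{4,5}}, {{0,4},{1,3},{2,5}},
      {{0,5},{1,4},{2,3}}},
     {{{0,1},{2,3},{4,5}}, {{0,2},{1,5},{3,4}}, {{0,3},{1,4},{2,5}}, {{0,4},{1,2},{3,5}},
      {{0,5},{1,3},{2,4}}},
     {{{0,1},{2,5},{3,4}}, {{0,2},{1,3},{4,5}}, {{0,3},{1,5},{2,4}}, {{0,4},{1,2},{3,5}},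
      {{0,5},{1,4},{2,3}}},
     {{{0,1},{2,5},{3,4}}, {{0,2},{1,4},{3,5}}, {{0,3},{1,2},{4,5}}, {{0,4},{1,5},{2,3}},
      {{0,5},{1,3},{2,4}}},
     {{{0,1},{2,3},{4,5}}, {{0,2},{1,4},{3,5}}, {{0,3},{1,5},{2,4}}, {{0,4},{1,3},{2,5}},
      {{0,5},{1,2},{3,4}}},
     {{{0,1},{2,4},{3,5}}, {{0,2},{1,3},{4,5}}, {{0,3},{1,4},{2,5}}, {{0,4},{1,5},{2,3}},
      {{0,5},{1,2},{3,4}}} ]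

lemma synthematicTotal_injective : Injective synthematicTotal := by decide

def totalPermHomSqConj : Perm (Fin 6) := swap 0 2 * swap 2 3 * swap 3 4 * swap 4 1

lemma swap_smul_synthematicTotal :
    ∀ i, swap (0 : Fin 6) 1 • synthematicTotal i = synthematicTotal (psiOfSwap i) := by
  decide

lemma finRotate_smul_synthematicTotal :
    ∀ i, finRotate 6 • synthematicTotal i = synthematicTotal (psiOfCycle i) := by
  decide

lemma psiOfSwap_smul_synthematicTotal : ∀ i, psiOfSwap • synthematicTotal i =
    synthematicTotal (MulAut.conj totalPermHomSqConj (swap 0 1) i) := by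
  decide

lemma psiOfCycle_smul_synthematicTotal : ∀ i, psiOfCycle • synthematicTotal i =
    synthematicTotal (MulAut.conj totalPermHomSqConj (finRotate 6) i) := by
  decide

lemma smul_synthematicTotal_mem_range (σ : Perm (Fin 6)) (i : Fin 6) :
    σ • synthematicTotal i ∈ Set.range synthematicTotal := by
  refine smul_mem_range_of_closure_eq_top (closure_finRotate_swap_zero_one 4) ?_ σ i
  rintro g (rfl | rfl)
  exacts [⟨psiOfCycle, finRotate_smul_synthematicTotal⟩, ⟨psiOfSwap, swap_smul_synthematicTotal⟩]

noncomputable def totalPermHom : Perm (Fin 6) →* Perm (Fin 6) :=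
  indexPermHom synthematicTotal_injective smul_synthematicTotal_mem_range

lemma totalPermHom_swap : totalPermHom (swap 0 1) = psiOfSwap :=
  indexPermHom_eq _ _ swap_smul_synthematicTotal

lemma totalPermHom_finRotate : totalPermHom (finRotate 6) = psiOfCycle :=
  indexPermHom_eq _ _ finRotate_smul_synthematicTotal

lemma totalPermHom_comp_self :
    totalPermHom.comp totalPermHom = (MulAut.conj totalPermHomSqConj).toMonoidHom := by
  refine MonoidHom.eq_of_eqOn_dense (closure_finRotate_swap_zero_one 4) ?_
  rintro g (rfl | rfl)
  · change totalPermHom (totalPermHom (finRotate 6)) = _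
    rw [totalPermHom_finRotate]
    exact indexPermHom_eq _ _ psiOfCycle_smul_synthematicTotal
  · change totalPermHom (totalPermHom (swap 0 1)) = _
    rw [totalPermHom_swap]
    exact indexPermHom_eq _ _ psiOfSwap_smul_synthematicTotal

lemma totalPermHom_injective : Injective totalPermHom := by
  intro σ τ h
  have h2 := congrArg totalPermHom h
  rw [← MonoidHom.comp_apply, ← MonoidHom.comp_apply, totalPermHom_comp_self] at h2
  exact (MulAut.conj totalPermHomSqConj).injective h2

noncomputable def totalMulAut : MulAut (Perm (Fin 6)) :=
  MulEquiv.ofBijective totalPermHom (Finite.injective_iff_bijective.mp totalPermHom_injective)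

lemma ne_conj_of_not_isSwap {α : Type*} [DecidableEq α] {ψ : MulAut (Perm α)} {a b : α}
    (hab : a ≠ b) (h : ¬ (ψ (swap a b)).IsSwap) (g : Perm α) : ψ ≠ MulAut.conj g := by
  rintro rfl
  exact h ⟨g a, g b, g.injective.ne hab, (swap_apply_apply g a b).symm⟩

lemma not_isSwap_psiOfSwap : ¬ psiOfSwap.IsSwap := by
  rw [← Perm.card_support_eq_two]
  decide

/-- There exists an automorphism `ψ` of `S₆` with `ψ((1 2)) = (1 6)(3 4)(2 5)` and
`ψ((1 2 3 4 5 6)) = (1 3 4)(2 6)`, and any such automorphism is not inner. -/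
theorem outer_automorphism_of_S6 :
    (∃ ψ : MulAut (Equiv.Perm (Fin 6)),
      ψ (Equiv.swap 0 1) = psiOfSwap ∧ ψ (finRotate 6) = psiOfCycle) ∧
    ∀ ψ : MulAut (Equiv.Perm (Fin 6)),
      ψ (Equiv.swap 0 1) = psiOfSwap → ψ (finRotate 6) = psiOfCycle →
      ∀ g : Equiv.Perm (Fin 6), ψ ≠ MulAut.conj g := by
  refine ⟨⟨totalMulAut, totalPermHom_swap, totalPermHom_finRotate⟩, fun ψ hswap _ ↦ ?_⟩
  exact ne_conj_of_not_isSwap (by decide : (0 : Fin 6) ≠ 1) (hswap ▸ not_isSwap_psiOfSwap)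
end

section
/- Let x_1, x_2, x_3, x_4, α be elements of a commutative ring satisfying 64·s_4 = (α + 4·s_2 − s_1²)², where s_i denotes the i-th elementary symmetric polynomial in x_1,…,x_4. Set D_1 = (x_1−x_2)(x_3−x_4) and D_2 = (x_1−x_3)(x_2−x_4). Then 16·(D_1² − D_1·D_2 + D_2²) = 3α² − 6(s_1² − 4s_2)·α + 3s_1⁴ − 24·s_1²·s_2 − 48·s_1·s_3 + 64·s_2². -/
-- The right side is the invariant `I = 12ae − 3bd + c²` of `at⁴ + bt³ + ct² + dt + e = ∏ (t − xᵢ)`.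
theorem sq_sub_mul_add_sq_eq_quarticInvariant {R : Type*} [CommRing R] (x₁ x₂ x₃ x₄ : R) :
    ((x₁ - x₂) * (x₃ - x₄)) ^ 2 - ((x₁ - x₂) * (x₃ - x₄)) * ((x₁ - x₃) * (x₂ - x₄)) +
        ((x₁ - x₃) * (x₂ - x₄)) ^ 2 =
      (x₁ * x₂ + x₁ * x₃ + x₁ * x₄ + x₂ * x₃ + x₂ * x₄ + x₃ * x₄) ^ 2 -
        3 * (x₁ + x₂ + x₃ + x₄) * (x₁ * x₂ * x₃ + x₁ * x₂ * x₄ + x₁ * x₃ * x₄ + x₂ * x₃ * x₄) +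
        12 * (x₁ * x₂ * x₃ * x₄) := by
  ring

/-- If `x₁, …, x₄, α` in a commutative ring satisfy the Igusa quartic relation
`64·s₄ = (α + 4s₂ − s₁²)²`, then with `D₁ = (x₁−x₂)(x₃−x₄)`, `D₂ = (x₁−x₃)(x₂−x₄)` one has
`16(D₁² − D₁D₂ + D₂²) = 3α² − 6(s₁² − 4s₂)α + 3s₁⁴ − 24s₁²s₂ − 48s₁s₃ + 64s₂²`. -/
theorem weight_eight_relation (R : Type*) [CommRing R] (x₁ x₂ x₃ x₄ α : R)
    (h : 64 * (x₁ * x₂ * x₃ * x₄) =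
      (α + 4 * (x₁ * x₂ + x₁ * x₃ + x₁ * x₄ + x₂ * x₃ + x₂ * x₄ + x₃ * x₄) -
        (x₁ + x₂ + x₃ + x₄) ^ 2) ^ 2) :
    16 * (((x₁ - x₂) * (x₃ - x₄)) ^ 2 -
        ((x₁ - x₂) * (x₃ - x₄)) * ((x₁ - x₃) * (x₂ - x₄)) +
        ((x₁ - x₃) * (x₂ - x₄)) ^ 2) =
      3 * α ^ 2 -
        6 * ((x₁ + x₂ + x₃ + x₄) ^ 2 -
          4 * (x₁ * x₂ + x₁ * x₃ + x₁ * x₄ + x₂ * x₃ + x₂ * x₄ + x₃ * x₄)) * α +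
        3 * (x₁ + x₂ + x₃ + x₄) ^ 4 -
        24 * (x₁ + x₂ + x₃ + x₄) ^ 2 *
          (x₁ * x₂ + x₁ * x₃ + x₁ * x₄ + x₂ * x₃ + x₂ * x₄ + x₃ * x₄) -
        48 * (x₁ + x₂ + x₃ + x₄) *
          (x₁ * x₂ * x₃ + x₁ * x₂ * x₄ + x₁ * x₃ * x₄ + x₂ * x₃ * x₄) +
        64 * (x₁ * x₂ + x₁ * x₃ + x₁ * x₄ + x₂ * x₃ + x₂ * x₄ + x₃ * x₄) ^ 2 := by
  rw [sq_sub_mul_add_sq_eq_quarticInvariant]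
  -- the right side is `3 (α + 4s₂ − s₁²)² + 16 (s₂² − 3s₁s₃)`
  linear_combination 3 * h
end
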